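/- Let D be an (n,k,λ)-difference set in a finite abelian group G of size n with characters {χ_i}_{i=1}^n. Define vectors e_i = (1/√k)(χ_i(g))_{g∈D} ∈ ℂ^k. Then {e_i}_{i=1}^n is an equiangular tight frame for ℂ^k. Conversely, if these vectors form an ETF, then D is a difference set. -/

import Mathlib

/-!
Write `S ψ = ∑ x ∈ D, ψ x` for a character `ψ` of `G`. The Gram entries of the frame are
`S (χ j - χ i) / k`, and by orthogonality of characters the frame is always unit-norm and tight
with bound `|G| / k`; so the theorem is about equiangularity, i.e. about `‖S ψ‖` being constant
over nontrivial `ψ`. Now `‖S ψ‖ ^ 2` is the Fourier transform of the difference count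
`N g = #{(a, b) ∈ D × D | a - b = g}`, with `N 0 = k`, so by Fourier inversion `N` is constant
on `G \ {0}` (say `= λ`) exactly when `‖S ψ‖ ^ 2` is constant (then `= k - λ`) on nontrivial `ψ`.
-/

open Finset ComplexConjugate

section DifferenceCount

variable {G : Type*} [AddCommGroup G] [DecidableEq G]

def diffCount (D : Finset G) (g : G) : ℕ := #{p ∈ D ×ˢ D | p.1 - p.2 = g}

lemma diffCount_zero (D : Finset G) : diffCount D 0 = #D := by
  rw [diffCount, ← diag_card D]
  congr 1
  ext ⟨a, b⟩
  simp only [mem_filter, mem_product, mem_diag, sub_eq_zero]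
  grind

lemma card_filter_ne_and_sub_eq_diffCount (D : Finset G) {g : G} (hg : g ≠ 0) :
    #{p ∈ D ×ˢ D | p.1 ≠ p.2 ∧ p.1 - p.2 = g} = diffCount D g := by
  refine congrArg card (filter_congr fun p _ => and_iff_right_of_imp fun h he => hg ?_)
  rw [← h, he, sub_self]

variable [Fintype G]

lemma sq_norm_sum_addChar (D : Finset G) (ψ : AddChar G ℂ) :
    ((‖∑ x ∈ D, ψ x‖ ^ 2 : ℝ) : ℂ) = ∑ g, (diffCount D g : ℂ) * ψ g := by
  calc ((‖∑ x ∈ D, ψ x‖ ^ 2 : ℝ) : ℂ)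
      = ∑ p ∈ D ×ˢ D, ψ (p.1 - p.2) := by
        rw [Complex.ofReal_pow, ← Complex.conj_mul', map_sum, sum_mul_sum, sum_product,
          sum_comm]
        refine sum_congr rfl fun a _ => sum_congr rfl fun b _ => ?_
        rw [← AddChar.map_neg_eq_conj, ← AddChar.map_add_eq_mul, neg_add_eq_sub]
    _ = ∑ g, (diffCount D g : ℂ) * ψ g := by
        rw [← sum_fiberwise_of_maps_to (fun p _ => mem_univ (p.1 - p.2))]
        refine sum_congr rfl fun g _ => ?_
        rw [sum_congr rfl fun p hp => congrArg ψ (mem_filter.1 hp).2, sum_const,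
          nsmul_eq_mul, diffCount]

lemma card_mul_diffCount (D : Finset G) (g : G) :
    (Fintype.card G : ℂ) * diffCount D g =
      ∑ ψ : AddChar G ℂ, ψ (-g) * ((‖∑ x ∈ D, ψ x‖ ^ 2 : ℝ) : ℂ) := by
  calc (Fintype.card G : ℂ) * diffCount D g
      = ∑ h, (diffCount D h : ℂ) * if h - g = 0 then (Fintype.card G : ℂ) else 0 := by
        simp_rw [sub_eq_zero, mul_ite, mul_zero, sum_ite_eq', mem_univ, if_true, mul_comm]
    _ = ∑ ψ : AddChar G ℂ, ψ (-g) * ((‖∑ x ∈ D, ψ x‖ ^ 2 : ℝ) : ℂ) := by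
        simp_rw [sq_norm_sum_addChar, ← AddChar.sum_apply_eq_ite, mul_sum, sum_comm (γ := G)]
        refine sum_congr rfl fun h _ => sum_congr rfl fun ψ _ => ?_
        rw [sub_eq_add_neg, AddChar.map_add_eq_mul]
        ring

lemma sq_norm_sum_addChar_of_diffCount_eq {D : Finset G} {lam : ℕ}
    (hlam : ∀ g ≠ 0, diffCount D g = lam) {ψ : AddChar G ℂ} (hψ : ψ ≠ 0) :
    ‖∑ x ∈ D, ψ x‖ ^ 2 = #D - lam := by
  have key : ((‖∑ x ∈ D, ψ x‖ ^ 2 : ℝ) : ℂ) = #D + lam * (∑ g, ψ g - ψ 0) := by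
    rw [sq_norm_sum_addChar, ← add_sum_erase _ _ (mem_univ 0), ← sum_erase_eq_sub (mem_univ 0),
      mul_sum, diffCount_zero, AddChar.map_zero_eq_one, mul_one]
    congr 1
    exact sum_congr rfl fun g hg => by rw [hlam g (ne_of_mem_erase hg)]
  rw [AddChar.sum_eq_zero_iff_ne_zero.2 hψ, AddChar.map_zero_eq_one] at key
  exact Complex.ofReal_inj.1 (key.trans (by push_cast; ring))

lemma card_mul_diffCount_of_norm_sum_addChar_eq {D : Finset G} {c : ℝ}
    (hc : ∀ ψ : AddChar G ℂ, ψ ≠ 0 → ‖∑ x ∈ D, ψ x‖ = c) {g : G} (hg : g ≠ 0) :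
    (Fintype.card G : ℂ) * diffCount D g = #D ^ 2 - c ^ 2 := by
  have hrest : ∑ ψ ∈ univ.erase (0 : AddChar G ℂ), ψ (-g) = -1 := by
    rw [sum_erase_eq_sub (mem_univ _), AddChar.sum_apply_eq_ite, if_neg (neg_ne_zero.2 hg),
      AddChar.zero_apply, zero_sub]
  have hflat : ∑ ψ ∈ univ.erase (0 : AddChar G ℂ), ψ (-g) * ((‖∑ x ∈ D, ψ x‖ ^ 2 : ℝ) : ℂ) =
      -c ^ 2 := by
    rw [sum_congr rfl fun ψ hψ => by rw [hc ψ (ne_of_mem_erase hψ)], ← sum_mul, hrest]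
    push_cast
    ring
  rw [card_mul_diffCount, ← add_sum_erase _ _ (mem_univ 0), hflat]
  simp [sq, sub_eq_add_neg]

theorem exists_diffCount_eq_iff_exists_norm_sum_addChar_eq (D : Finset G) :
    (∃ lam : ℕ, ∀ g ≠ 0, diffCount D g = lam) ↔
      ∃ c : ℝ, ∀ ψ : AddChar G ℂ, ψ ≠ 0 → ‖∑ x ∈ D, ψ x‖ = c := by
  constructor
  · rintro ⟨lam, hlam⟩
    refine ⟨√(#D - lam), fun ψ hψ => ?_⟩
    rw [← sq_norm_sum_addChar_of_diffCount_eq hlam hψ, Real.sqrt_sq (norm_nonneg _)]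
  · rintro ⟨c, hc⟩
    by_cases hG : ∃ g₀ : G, g₀ ≠ 0
    · obtain ⟨g₀, hg₀⟩ := hG
      refine ⟨diffCount D g₀, fun g hg => ?_⟩
      have hcard : (Fintype.card G : ℂ) ≠ 0 := Nat.cast_ne_zero.2 Fintype.card_ne_zero
      exact_mod_cast mul_left_cancel₀ hcard <|
        (card_mul_diffCount_of_norm_sum_addChar_eq hc hg).trans
          (card_mul_diffCount_of_norm_sum_addChar_eq hc hg₀).symm
    · exact ⟨0, fun g hg => (hG ⟨g, hg⟩).elim⟩

end DifferenceCount

section Frame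

open Matrix

variable {G ι κ : Type*} [AddCommGroup G] [Fintype G] {D : Finset G}

noncomputable def charFrame (d : ι ≃ D) (χ : κ → AddChar G ℂ) : Matrix ι κ ℂ :=
  of fun t i => (√(#D : ℝ) : ℂ)⁻¹ * χ i (d t)

lemma conj_charFrame_mul_charFrame (d : ι ≃ D) (χ : κ → AddChar G ℂ) (t t' : ι) (i j : κ) :
    conj (charFrame d χ t i) * charFrame d χ t' j = (#D : ℂ)⁻¹ * (χ i (-d t) * χ j (d t')) := by
  have hscale : (√(#D : ℝ) : ℂ)⁻¹ * (√(#D : ℝ) : ℂ)⁻¹ = (#D : ℂ)⁻¹ := by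
    rw [← mul_inv, ← Complex.ofReal_mul, Real.mul_self_sqrt (Nat.cast_nonneg _),
      Complex.ofReal_natCast]
  rw [charFrame, of_apply, of_apply, map_mul, map_inv₀, Complex.conj_ofReal, mul_mul_mul_comm,
    hscale, AddChar.map_neg_eq_conj]

lemma sum_conj_charFrame_mul_charFrame [Fintype ι] (d : ι ≃ D) (χ : κ → AddChar G ℂ) (i j : κ) :
    ∑ t, conj (charFrame d χ t i) * charFrame d χ t j = (#D : ℂ)⁻¹ * ∑ x ∈ D, (χ j - χ i) x := by
  simp_rw [conj_charFrame_mul_charFrame, ← mul_sum, mul_comm (χ i _), ← AddChar.sub_apply]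
  rw [← sum_coe_sort D, ← d.sum_comp]

lemma sum_sq_norm_charFrame [Fintype ι] (d : ι ≃ D) (χ : κ → AddChar G ℂ) (hD : D.Nonempty)
    (i : κ) : ∑ t, ‖charFrame d χ t i‖ ^ 2 = 1 := by
  have hentry : ∀ t, ‖charFrame d χ t i‖ ^ 2 = (#D : ℝ)⁻¹ := fun t => by
    rw [charFrame, of_apply, norm_mul, norm_inv, Complex.norm_real,
      Real.norm_of_nonneg (Real.sqrt_nonneg _), AddChar.norm_apply, mul_one, inv_pow,
      Real.sq_sqrt (Nat.cast_nonneg _)]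
  rw [sum_congr rfl fun t _ => hentry t, sum_const, card_univ, Fintype.card_congr d,
    Fintype.card_coe, nsmul_eq_mul, mul_inv_cancel₀ (Nat.cast_ne_zero.2 hD.card_pos.ne')]

lemma charFrame_mul_conjTranspose [DecidableEq G] [Fintype ι] [DecidableEq ι] [Fintype κ]
    (d : ι ≃ D) {χ : κ → AddChar G ℂ} (hχ : χ.Bijective) :
    charFrame d χ * (charFrame d χ)ᴴ = ((Fintype.card G / #D : ℝ) : ℂ) • 1 := by
  ext t t'
  simp_rw [mul_apply, conjTranspose_apply, Complex.star_def, mul_comm (charFrame d χ t _),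
    conj_charFrame_mul_charFrame, ← AddChar.map_add_eq_mul, neg_add_eq_sub, ← mul_sum,
    hχ.sum_comp (fun ψ : AddChar G ℂ => ψ ((d t : G) - d t')), AddChar.sum_apply_eq_ite,
    sub_eq_zero, Subtype.coe_inj, d.injective.eq_iff, Matrix.smul_apply, one_apply]
  split_ifs <;> push_cast <;> ring

lemma exists_norm_sum_conj_charFrame_mul_eq_iff [Fintype ι] (d : ι ≃ D) {χ : κ → AddChar G ℂ}
    (hχ : χ.Bijective) (hD : D.Nonempty) :
    (∃ c : ℝ, ∀ i j, i ≠ j → ‖∑ t, conj (charFrame d χ t i) * charFrame d χ t j‖ = c) ↔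
      ∃ c : ℝ, ∀ ψ : AddChar G ℂ, ψ ≠ 0 → ‖∑ x ∈ D, ψ x‖ = c := by
  have hcard : (0 : ℝ) < #D := Nat.cast_pos.2 hD.card_pos
  simp_rw [sum_conj_charFrame_mul_charFrame, norm_mul, norm_inv, Complex.norm_natCast]
  constructor
  · rintro ⟨c, hc⟩
    refine ⟨#D * c, fun ψ hψ => ?_⟩
    obtain ⟨i, hi⟩ := hχ.2 0
    obtain ⟨j, hj⟩ := hχ.2 ψ
    have hij : i ≠ j := fun h => hψ (by rw [← hj, ← h, hi])
    rw [← hc i j hij, hi, hj, sub_zero, mul_inv_cancel_left₀ hcard.ne']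
  · rintro ⟨c, hc⟩
    refine ⟨(#D : ℝ)⁻¹ * c, fun i j hij => ?_⟩
    rw [hc _ (sub_ne_zero.2 fun h => hij (hχ.1 h).symm)]

end Frame

open Matrix in
theorem etf_iff_difference_set_general {G : Type*} [AddCommGroup G] [Fintype G] [DecidableEq G]
    (n k : ℕ) (hk : 0 < k)
    (D : Finset G)
    (d : Fin k ≃ {x // x ∈ D}) (χ : Fin n ≃ AddChar G ℂ)
    (E : Matrix (Fin k) (Fin n) ℂ)
    (hE : ∀ t i, E t i = ((Real.sqrt k : ℂ))⁻¹ * (χ i) ((d t : G))) :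
    ((∀ i : Fin n, ∑ t, ‖E t i‖ ^ 2 = 1) ∧
      (∃ A : ℝ, 0 < A ∧ E * Eᴴ = (A : ℂ) • 1) ∧
      (∃ c : ℝ, ∀ i j : Fin n, i ≠ j →
        ‖∑ t, (starRingEnd ℂ) (E t i) * E t j‖ = c)) ↔
    (∃ lam : ℕ, ∀ g : G, g ≠ 0 →
        ((D ×ˢ D).filter (fun p => p.1 ≠ p.2 ∧ p.1 - p.2 = g)).card = lam) := by
  obtain rfl : #D = k := by simpa using (Fintype.card_congr d).symm
  obtain rfl : E = charFrame d χ := ext hE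
  have hD : D.Nonempty := card_pos.1 hk
  have hdiff : (∃ lam : ℕ, ∀ g : G, g ≠ 0 → #{p ∈ D ×ˢ D | p.1 ≠ p.2 ∧ p.1 - p.2 = g} = lam) ↔
      ∃ lam : ℕ, ∀ g ≠ 0, diffCount D g = lam :=
    exists_congr fun lam => forall₂_congr fun g hg => by
      rw [card_filter_ne_and_sub_eq_diffCount D hg]
  rw [hdiff, exists_diffCount_eq_iff_exists_norm_sum_addChar_eq,
    ← exists_norm_sum_conj_charFrame_mul_eq_iff d χ.bijective hD]
  have hA : (0 : ℝ) < Fintype.card G / #D := div_pos (Nat.cast_pos.2 Fintype.card_pos)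
    (Nat.cast_pos.2 hk)
  exact ⟨fun h => h.2.2, fun h => ⟨sum_sq_norm_charFrame d χ hD, ⟨_, hA,
    charFrame_mul_conjTranspose d χ.bijective⟩, h⟩⟩

open Matrix in
/-- The vectors `e_i = (1/√k)(χ_i(g))_{g ∈ D}` (rows indexed by a difference set `D`,
columns by all characters of `G`) form an equiangular tight frame for `ℂ^k`
if and only if `D` is a difference set in `G`. -/
theorem etf_iff_difference_set {G : Type*} [AddCommGroup G] [Fintype G] [DecidableEq G]
    (n k : ℕ) (hk : 0 < k) (hn : Fintype.card G = n)
    (D : Finset G) (hD : D.card = k)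
    (d : Fin k ≃ {x // x ∈ D}) (χ : Fin n ≃ AddChar G ℂ)
    (E : Matrix (Fin k) (Fin n) ℂ)
    (hE : ∀ t i, E t i = ((Real.sqrt k : ℂ))⁻¹ * (χ i) ((d t : G))) :
    ((∀ i : Fin n, ∑ t, ‖E t i‖ ^ 2 = 1) ∧
      (∃ A : ℝ, 0 < A ∧ E * Eᴴ = (A : ℂ) • 1) ∧
      (∃ c : ℝ, ∀ i j : Fin n, i ≠ j →
        ‖∑ t, (starRingEnd ℂ) (E t i) * E t j‖ = c)) ↔
    (∃ lam : ℕ, ∀ g : G, g ≠ 0 →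
        ((D ×ˢ D).filter (fun p => p.1 ≠ p.2 ∧ p.1 - p.2 = g)).card = lam) :=
  etf_iff_difference_set_general n k hk D d χ E hE
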